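/- SU(3), embedded as the stabiliser of e₁, preserves the G₂ 3-form: for every ℂ-linear map U : ℂ³ → ℂ³ that is unitary with complex determinant 1, the ℝ-linear map A = id_ℝ ⊕ U of ℝ ⊕ ℂ³ = ℝ⁷ satisfies φ₀(Au, Av, Aw) = φ₀(u, v, w) for all u, v, w ∈ ℝ⁷. -/

import Mathlib

open scoped RealInnerProductSpace

noncomputable section

abbrev E7 : Type := EuclideanSpace ℝ (Fin 7)

/-- `dxⁱ ∧ dxʲ ∧ dxᵏ` evaluated on the triple `(u, v, w)`. -/
def triDet (u v w : E7) (i j k : Fin 7) : ℝ :=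
  Matrix.det !![u i, u j, u k; v i, v j, v k; w i, w j, w k]

/-- The standard G₂ 3-form `φ₀ = dx¹²³ + dx¹⁴⁵ + dx¹⁶⁷ + dx²⁴⁶ − dx²⁵⁷ − dx³⁴⁷ − dx³⁵⁶`
(here with 0-indexed coordinates). -/
def phi0 (u v w : E7) : ℝ :=
  triDet u v w 0 1 2 + triDet u v w 0 3 4 + triDet u v w 0 5 6 +
    triDet u v w 1 3 5 - triDet u v w 1 4 6 - triDet u v w 2 3 6 - triDet u v w 2 4 5

/-- `ℂ³` with its standard Hermitian inner product. -/
abbrev C3 : Type := EuclideanSpace ℂ (Fin 3)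

/-- The inclusion `ℂ³ ⊂ ℝ⁷ = ℝ ⊕ ℂ³` given by the complex coordinates
`z¹ = x² + ix³`, `z² = x⁴ + ix⁵`, `z³ = x⁶ + ix⁷` (0-indexed: `e₁` is index 0). -/
def toR7 (z : C3) : E7 :=
  (WithLp.equiv 2 (Fin 7 → ℝ)).symm
    ![0, (z 0).re, (z 0).im, (z 1).re, (z 1).im, (z 2).re, (z 2).im]

/-- The basis vector `e₁` spanning the `ℝ` factor of `ℝ⁷ = ℝ ⊕ ℂ³`. -/
def E1 : E7 := EuclideanSpace.single 0 1

/-- The standard Kähler form `ω₀(u, v) = g₀(iu, v)` on `ℂ³`, `g₀ = Re⟨·,·⟩`. -/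
def omegaC3 (u v : C3) : ℝ := (inner ℂ (Complex.I • u) v : ℂ).re

/-- The standard complex volume form `Ω₀ = dz¹∧dz²∧dz³` on `ℂ³`: the determinant of
the complex 3×3 matrix with columns `v₁, v₂, v₃`. -/
def OmegaC3 (v₁ v₂ v₃ : C3) : ℂ :=
  Matrix.det !![v₁ 0, v₂ 0, v₃ 0; v₁ 1, v₂ 1, v₃ 1; v₁ 2, v₂ 2, v₃ 2]

/-- The projection `ℝ⁷ = ℝ ⊕ ℂ³ → ℂ³` extracting the complex coordinates. -/
def toC3 (x : E7) : C3 :=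
  (WithLp.equiv 2 (Fin 3 → ℂ)).symm
    ![(x 1 : ℂ) + (x 2 : ℂ) * Complex.I,
      (x 3 : ℂ) + (x 4 : ℂ) * Complex.I,
      (x 5 : ℂ) + (x 6 : ℂ) * Complex.I]

/-- The map `A = id_ℝ ⊕ U` of `ℝ⁷ = ℝ ⊕ ℂ³`. -/
def extendU (U : C3 →ₗ[ℂ] C3) (x : E7) : E7 :=
  x 0 • E1 + toR7 (U (toC3 x))

/- Writing `u = (u₀, z)` with `z ∈ ℂ³`, the form splits as `φ₀ = e¹ ∧ ω₀ + Re Ω₀`; both `ω₀` (a unitary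
invariant) and `Ω₀` (which scales by the complex determinant) are preserved by `SU(3)`, and `A` fixes
the `ℝ` coordinate. -/

theorem phi0_eq_omegaC3_add_re_OmegaC3 (u v w : E7) :
    phi0 u v w = u 0 * omegaC3 (toC3 v) (toC3 w) - v 0 * omegaC3 (toC3 u) (toC3 w)
      + w 0 * omegaC3 (toC3 u) (toC3 v) + (OmegaC3 (toC3 u) (toC3 v) (toC3 w)).re := by
  simp only [phi0, triDet, omegaC3, OmegaC3, toC3, Matrix.det_fin_three, Matrix.of_apply,
    WithLp.equiv_symm_apply, PiLp.toLp_apply, PiLp.inner_apply, RCLike.inner_apply, PiLp.smul_apply,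
    Fin.sum_univ_three, Matrix.cons_val', Matrix.cons_val_zero, Matrix.cons_val_one,
    Matrix.head_cons, Matrix.head_fin_const, Matrix.cons_val_fin_one, Matrix.empty_val',
    Matrix.cons_val_two, Matrix.tail_cons, smul_eq_mul, map_mul, map_add,
    Complex.conj_I, Complex.conj_ofReal, Complex.add_re, Complex.mul_re, Complex.mul_im,
    Complex.add_im, Complex.I_re, Complex.I_im, Complex.ofReal_re, Complex.ofReal_im,
    Complex.neg_re, Complex.neg_im, Complex.sub_re]
  ring

theorem extendU_apply_zero (U : C3 →ₗ[ℂ] C3) (x : E7) : extendU U x 0 = x 0 := by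
  simp [extendU, E1, toR7]

theorem toC3_extendU (U : C3 →ₗ[ℂ] C3) (x : E7) : toC3 (extendU U x) = U (toC3 x) := by
  ext i
  fin_cases i <;> simp [toC3, extendU, toR7, E1, Complex.re_add_im]

theorem omegaC3_map_of_unitary (U : C3 →ₗ[ℂ] C3)
    (hunitary : ∀ z w : C3, (inner ℂ (U z) (U w) : ℂ) = inner ℂ z w) (z w : C3) :
    omegaC3 (U z) (U w) = omegaC3 z w := by
  simp only [omegaC3, inner_smul_left, hunitary]

theorem EuclideanSpace.linearMap_apply_eq_sum_toMatrix {𝕜 ι : Type*} [RCLike 𝕜] [Fintype ι]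
    [DecidableEq ι] (U : EuclideanSpace 𝕜 ι →ₗ[𝕜] EuclideanSpace 𝕜 ι) (z : EuclideanSpace 𝕜 ι)
    (i : ι) :
    U z i = ∑ j, LinearMap.toMatrix (PiLp.basisFun 2 𝕜 ι) (PiLp.basisFun 2 𝕜 ι) U i j * z j := by
  simpa [Matrix.mulVec, dotProduct, PiLp.basisFun_repr] using
    (congrFun (LinearMap.toMatrix_mulVec_repr (PiLp.basisFun 2 𝕜 ι) (PiLp.basisFun 2 𝕜 ι) U z) i).symm

theorem OmegaC3_map (U : C3 →ₗ[ℂ] C3) (u v w : C3) :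
    OmegaC3 (U u) (U v) (U w) = LinearMap.det U * OmegaC3 u v w := by
  set M := LinearMap.toMatrix (PiLp.basisFun 2 ℂ (Fin 3)) (PiLp.basisFun 2 ℂ (Fin 3)) U
  have hcolumns : !![U u 0, U v 0, U w 0; U u 1, U v 1, U w 1; U u 2, U v 2, U w 2]
      = M * !![u 0, v 0, w 0; u 1, v 1, w 1; u 2, v 2, w 2] := by
    ext i j
    rw [Matrix.mul_apply]
    fin_cases i <;> fin_cases j <;>
      simpa [Fin.sum_univ_three] using EuclideanSpace.linearMap_apply_eq_sum_toMatrix U _ _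
  rw [OmegaC3, OmegaC3, hcolumns, Matrix.det_mul, LinearMap.det_toMatrix]

/-- `SU(3)`, embedded as the stabiliser of `e₁`, preserves the G₂ 3-form: for every
unitary `ℂ`-linear map `U : ℂ³ → ℂ³` of complex determinant 1, the map
`A = id_ℝ ⊕ U` of `ℝ ⊕ ℂ³ = ℝ⁷` satisfies `φ₀(Au, Av, Aw) = φ₀(u, v, w)`. -/
theorem statement12 (U : C3 →ₗ[ℂ] C3)
    (hunitary : ∀ z w : C3, (inner ℂ (U z) (U w) : ℂ) = inner ℂ z w)
    (hdet : LinearMap.det U = 1)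
    (u v w : E7) :
    phi0 (extendU U u) (extendU U v) (extendU U w) = phi0 u v w := by
  simp only [phi0_eq_omegaC3_add_re_OmegaC3, extendU_apply_zero, toC3_extendU,
    omegaC3_map_of_unitary U hunitary, OmegaC3_map, hdet, one_mul]
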